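/- The coherence maps making P lax monoidal — namely the product map P(M,X) × P(N,Y) → P(M×N, X⊔Y) given by (S,q,f), (T,r,g) ↦ (S×T, q×r, f×g) (using the isomorphism (A ⊔ B)‾ ≅ Ā × B̄), and the unit map {∗} → P({∗},∅) picking the trivial system ({∗},!,!,!) — are natural in (M,X) and (N,Y) and satisfy the associativity and unitality axioms of a lax monoidal functor P : MDN → Set. -/

import Mathlib

/-- A typed finite set: a finite set together with a typing function to `Type`. -/
structure TFS where
  carrier : Type
  fintype : Fintype carrier
  typ : carrier → Type

/-- A typed function between typed finite sets. -/
def TFS.hom (A B : TFS) : Type :=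
  {q : A.carrier → B.carrier // ∀ a, B.typ (q a) = A.typ a}

/-- Disjoint union of typed finite sets. -/
def TFS.sum (A B : TFS) : TFS :=
  letI := A.fintype; letI := B.fintype
  ⟨A.carrier ⊕ B.carrier, inferInstance, Sum.elim A.typ B.typ⟩

/-- The empty typed finite set `(∅, !)`. -/
def TFS.empty : TFS :=
  ⟨PEmpty, inferInstance, fun x => PEmpty.elim x⟩

namespace TFS.hom

def id (A : TFS) : TFS.hom A A := ⟨fun a => a, fun _ => rfl⟩

def comp {A B C : TFS} (g : TFS.hom B C) (f : TFS.hom A B) : TFS.hom A C :=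
  ⟨fun a => g.1 (f.1 a), fun a => (g.2 (f.1 a)).trans (f.2 a)⟩

def sumMap {A B C D : TFS} (f : TFS.hom A B) (g : TFS.hom C D) :
    TFS.hom (A.sum C) (B.sum D) :=
  ⟨Sum.map f.1 g.1, by
    rintro (a | c)
    · exact f.2 a
    · exact g.2 c⟩

def fold {A B : TFS} : TFS.hom ((A.sum B).sum B) (A.sum B) :=
  ⟨Sum.elim (fun x => x) Sum.inr, by rintro ((a | b) | b) <;> rfl⟩

def inl {A B : TFS} : TFS.hom A (A.sum B) := ⟨Sum.inl, fun _ => rfl⟩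

def inr {A B : TFS} : TFS.hom B (A.sum B) := ⟨Sum.inr, fun _ => rfl⟩

def shuffle {A B C D : TFS} :
    TFS.hom ((A.sum B).sum (C.sum D)) ((A.sum C).sum (B.sum D)) :=
  ⟨fun x => match x with
    | .inl (.inl a) => .inl (.inl a)
    | .inl (.inr b) => .inr (.inl b)
    | .inr (.inl c) => .inl (.inr c)
    | .inr (.inr d) => .inr (.inr d),
   by rintro ((a | b) | (c | d)) <;> rfl⟩

def assocHom {A B C : TFS} : TFS.hom ((A.sum B).sum C) (A.sum (B.sum C)) :=
  ⟨fun x => match x with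
    | .inl (.inl a) => .inl a
    | .inl (.inr b) => .inr (.inl b)
    | .inr c => .inr (.inr c),
   by rintro ((a | b) | c) <;> rfl⟩

def assocInvHom {A B C : TFS} : TFS.hom (A.sum (B.sum C)) ((A.sum B).sum C) :=
  ⟨fun x => match x with
    | .inl a => .inl (.inl a)
    | .inr (.inl b) => .inl (.inr b)
    | .inr (.inr c) => .inr c,
   by rintro (a | (b | c)) <;> rfl⟩

end TFS.hom

/-- The dependent product `Ā = ∏_{a ∈ A} τ(a)` of a typed finite set. -/
def TFS.prod (A : TFS) : Type := (a : A.carrier) → A.typ a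

/-- The contravariant action of a typed function on dependent products. -/
def TFS.hom.prodMap {A B : TFS} (q : TFS.hom A B) (f : B.prod) : A.prod :=
  fun a => cast (q.2 a) (f (q.1 a))

def TFS.pair {A B : TFS} (f : A.prod) (g : B.prod) : (A.sum B).prod :=
  fun x => match x with
  | .inl a => f a
  | .inr b => g b

def TFS.fst {A B : TFS} (f : (A.sum B).prod) : A.prod := fun a => f (Sum.inl a)

def TFS.snd {A B : TFS} (f : (A.sum B).prod) : B.prod := fun b => f (Sum.inr b)

/-- A box: a pair of typed finite sets of input and output ports. -/
structure Box where
  inp : TFS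
  out : TFS

/-- Disjoint union of boxes. -/
def Box.tensor (X Y : Box) : Box := ⟨X.inp.sum Y.inp, X.out.sum Y.out⟩

/-- The empty box `(∅, ∅)`. -/
def Box.unit : Box := ⟨TFS.empty, TFS.empty⟩

/-- A wiring diagram `φ : X → Y`. -/
structure WD (X Y : Box) where
  win : TFS.hom X.inp (Y.inp.sum X.out)
  wout : TFS.hom Y.out X.out

/-- The identity wiring diagram. -/
def WD.id (X : Box) : WD X X := ⟨TFS.hom.inl, TFS.hom.id X.out⟩

/-- Composition of wiring diagrams: `WD.comp ψ φ` is `ψ ∘ φ`. -/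
def WD.comp {X Y Z : Box} (ψ : WD Y Z) (φ : WD X Y) : WD X Z where
  win := TFS.hom.fold.comp
    ((((TFS.hom.id Z.inp).sumMap φ.wout).sumMap (TFS.hom.id X.out)).comp
      ((ψ.win.sumMap (TFS.hom.id X.out)).comp φ.win))
  wout := φ.wout.comp ψ.wout

/-- Disjoint union of wiring diagrams. -/
def WD.tensor {X X' Y Y' : Box} (φ : WD X Y) (φ' : WD X' Y') :
    WD (X.tensor X') (Y.tensor Y') where
  win := TFS.hom.shuffle.comp (φ.win.sumMap φ'.win)
  wout := φ.wout.sumMap φ'.wout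

/-- A modal box: a mode set together with an interface function. -/
structure ModalBox where
  mode : Type
  box : mode → Box

/-- A mode-dependent network `(ε, σ) : (M, X) → (N, Y)`; the typing of `ε`
encodes `dom (ε m) = X m` and `cod (ε m) = Y (σ m)`. -/
structure MDNHom (A B : ModalBox) where
  σ : A.mode → B.mode
  ε : (m : A.mode) → WD (A.box m) (B.box (σ m))

def MDNId (A : ModalBox) : MDNHom A A := ⟨fun m => m, fun m => WD.id (A.box m)⟩

/-- `MDNComp g f` is the composite `g ∘ f` in MDN. -/
def MDNComp {A B C : ModalBox} (g : MDNHom B C) (f : MDNHom A B) : MDNHom A C :=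
  ⟨fun m => g.σ (f.σ m), fun m => WD.comp (g.ε (f.σ m)) (f.ε m)⟩

/-- Monoidal product of modal boxes. -/
def ModalBox.tensor (A B : ModalBox) : ModalBox :=
  ⟨A.mode × B.mode, fun p => (A.box p.1).tensor (B.box p.2)⟩

/-- The monoidal unit `({∗}, ∅)` of MDN. -/
def ModalBox.unit : ModalBox := ⟨PUnit, fun _ => Box.unit⟩

/-- Monoidal product of mode-dependent networks. -/
def MDNTensorHom {A A' B B' : ModalBox} (f : MDNHom A A') (g : MDNHom B B') :
    MDNHom (A.tensor B) (A'.tensor B') :=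
  ⟨fun p => (f.σ p.1, g.σ p.2), fun p => (f.ε p.1).tensor (g.ε p.2)⟩

/-- A modal dynamical system on a modal box. -/
structure MDS (A : ModalBox) where
  S : Type
  q : S → A.mode
  fIn : (s : S) → (A.box (q s)).inp.prod → S
  fOut : (s : S) → (A.box (q s)).out.prod

/-- The action of `P` on a morphism of MDN. -/
def MDS.map {A B : ModalBox} (h : MDNHom A B) (D : MDS A) : MDS B where
  S := D.S
  q := fun s => h.σ (D.q s)
  fIn := fun s y => D.fIn s ((h.ε (D.q s)).win.prodMap (TFS.pair y (D.fOut s)))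
  fOut := fun s => (h.ε (D.q s)).wout.prodMap (D.fOut s)


/-- The coherence (product) map of the lax monoidal functor `P`. -/
def MDS.tensor {A B : ModalBox} (D : MDS A) (E : MDS B) : MDS (A.tensor B) where
  S := D.S × E.S
  q := fun p => (D.q p.1, E.q p.2)
  fIn := fun p y => (D.fIn p.1 (TFS.fst y), E.fIn p.2 (TFS.snd y))
  fOut := fun p => TFS.pair (D.fOut p.1) (E.fOut p.2)

/-- The unit coherence map of `P`: the trivial system `({∗}, !, !, !)`. -/
def MDS.unitSystem : MDS ModalBox.unit where
  S := PUnit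
  q := fun _ => PUnit.unit
  fIn := fun s _ => s
  fOut := fun _ => fun x => PEmpty.elim x

/-- The associator wiring diagram. -/
def WD.assocWD (X Y Z : Box) :
    WD ((X.tensor Y).tensor Z) (X.tensor (Y.tensor Z)) where
  win := TFS.hom.inl.comp TFS.hom.assocHom
  wout := TFS.hom.assocInvHom

/-- The associator of MDN. -/
def MDNAssoc (A B C : ModalBox) :
    MDNHom ((A.tensor B).tensor C) (A.tensor (B.tensor C)) :=
  ⟨fun p => (p.1.1, (p.1.2, p.2)), fun p => WD.assocWD _ _ _⟩

/-- The left unitor wiring diagram. -/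
def WD.leftUnitorWD (X : Box) : WD (Box.unit.tensor X) X where
  win := ⟨fun x => match x with
      | .inl e => PEmpty.elim e
      | .inr a => .inl a,
    by
      rintro (e | a)
      · exact PEmpty.elim e
      · rfl⟩
  wout := TFS.hom.inr

/-- The right unitor wiring diagram. -/
def WD.rightUnitorWD (X : Box) : WD (X.tensor Box.unit) X where
  win := ⟨fun x => match x with
      | .inl a => .inl a
      | .inr e => PEmpty.elim e,
    by
      rintro (a | e)
      · rfl
      · exact PEmpty.elim e⟩
  wout := TFS.hom.inl

/-- The left unitor of MDN. -/
def MDNLeftUnitor (A : ModalBox) : MDNHom (ModalBox.unit.tensor A) A :=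
  ⟨fun p => p.2, fun p => WD.leftUnitorWD (A.box p.2)⟩

/-- The right unitor of MDN. -/
def MDNRightUnitor (A : ModalBox) : MDNHom (A.tensor ModalBox.unit) A :=
  ⟨fun p => p.1, fun p => WD.rightUnitorWD (A.box p.1)⟩

/-- Isomorphism of modal dynamical systems (equality of the underlying data
transported along a bijection of state sets). -/
def MDS.Equivalent {A : ModalBox} (D E : MDS A) : Prop :=
  ∃ e : D.S ≃ E.S,
    (∀ s, E.q (e s) = D.q s) ∧
    (∀ s, HEq (E.fIn (e s)) (fun x => e (D.fIn s x))) ∧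
    (∀ s, HEq (E.fOut (e s)) (D.fOut s))

/-! The coherence maps act componentwise on states, so all four laws reduce to identities
between port maps `prodMap`. Only naturality has content: the input wiring of `φ ⊗ φ'` is
`φ.win ⊔ φ'.win` followed by a shuffle of ports, so on a pair of outputs it hands each factor
exactly the inputs `φ` and `φ'` would compute separately. The associativity and unit laws hold
definitionally once the state product is reassociated, except for the readout of the
associator, which needs `(A ⊔ B) ⊔ C ≅ A ⊔ (B ⊔ C)` on port products. -/

namespace TFS

theorem pair_fst_snd {A B : TFS} (f : (A.sum B).prod) : pair (fst f) (snd f) = f := by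
  funext x
  cases x <;> rfl

namespace hom

theorem prodMap_comp {A B C : TFS} (g : TFS.hom B C) (f : TFS.hom A B) (h : C.prod) :
    (g.comp f).prodMap h = f.prodMap (g.prodMap h) :=
  funext fun _ => (cast_cast _ _ _).symm

theorem prodMap_sumMap_pair {A B C D : TFS} (f : TFS.hom A B) (g : TFS.hom C D)
    (x : B.prod) (y : D.prod) :
    (f.sumMap g).prodMap (pair x y) = pair (f.prodMap x) (g.prodMap y) := by
  funext a
  cases a <;> rfl

theorem prodMap_shuffle_pair {A B C D : TFS} (a : A.prod) (b : B.prod) (c : C.prod)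
    (d : D.prod) :
    (shuffle : TFS.hom ((A.sum B).sum (C.sum D)) _).prodMap (pair (pair a c) (pair b d)) =
      pair (pair a b) (pair c d) := by
  funext x
  rcases x with ((_ | _) | (_ | _)) <;> rfl

theorem prodMap_assocInvHom_pair {A B C : TFS} (a : A.prod) (b : B.prod) (c : C.prod) :
    (assocInvHom : TFS.hom (A.sum (B.sum C)) _).prodMap (pair (pair a b) c) =
      pair a (pair b c) := by
  funext x
  rcases x with (_ | (_ | _)) <;> rfl

end hom

end TFS

namespace WD

open TFS

theorem tensor_win_prodMap_pair {X X' Y Y' : Box} (φ : WD X Y) (φ' : WD X' Y')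
    (y : (Y.inp.sum Y'.inp).prod) (o : X.out.prod) (o' : X'.out.prod) :
    (φ.tensor φ').win.prodMap (pair y (pair o o')) =
      pair (φ.win.prodMap (pair (fst y) o)) (φ'.win.prodMap (pair (snd y) o')) := by
  have hshuffle := hom.prodMap_shuffle_pair (fst y) o (snd y) o'
  rw [pair_fst_snd] at hshuffle
  exact (hom.prodMap_comp _ _ _).trans
    ((congrArg (φ.win.sumMap φ'.win).prodMap hshuffle).trans (hom.prodMap_sumMap_pair _ _ _ _))

theorem tensor_wout_prodMap_pair {X X' Y Y' : Box} (φ : WD X Y) (φ' : WD X' Y')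
    (o : X.out.prod) (o' : X'.out.prod) :
    (φ.tensor φ').wout.prodMap (pair o o') = pair (φ.wout.prodMap o) (φ'.wout.prodMap o') :=
  hom.prodMap_sumMap_pair _ _ _ _

end WD

namespace MDS

theorem map_tensor {A A' B B' : ModalBox} (f : MDNHom A A') (g : MDNHom B B') (D : MDS A)
    (E : MDS B) : (D.tensor E).map (MDNTensorHom f g) = (D.map f).tensor (E.map g) := by
  simp only [MDS.map, MDS.tensor, MDNTensorHom]
  congr 1
  · funext s y
    have hwin := WD.tensor_win_prodMap_pair (f.ε (D.q s.1)) (g.ε (E.q s.2)) y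
      (D.fOut s.1) (E.fOut s.2)
    exact Prod.ext (congrArg (D.fIn s.1 ∘ TFS.fst) hwin) (congrArg (E.fIn s.2 ∘ TFS.snd) hwin)
  · funext s
    exact WD.tensor_wout_prodMap_pair _ _ _ _

theorem equivalent_map_assoc {A B C : ModalBox} (D : MDS A) (E : MDS B) (F : MDS C) :
    Equivalent (((D.tensor E).tensor F).map (MDNAssoc A B C)) (D.tensor (E.tensor F)) :=
  ⟨Equiv.prodAssoc _ _ _, fun _ => rfl, fun _ => HEq.rfl,
    fun _ => heq_of_eq (TFS.hom.prodMap_assocInvHom_pair _ _ _).symm⟩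

theorem equivalent_map_leftUnitor {A : ModalBox} (D : MDS A) :
    Equivalent ((unitSystem.tensor D).map (MDNLeftUnitor A)) D :=
  ⟨Equiv.punitProd _, fun _ => rfl, fun _ => HEq.rfl, fun _ => HEq.rfl⟩

theorem equivalent_map_rightUnitor {A : ModalBox} (D : MDS A) :
    Equivalent ((D.tensor unitSystem).map (MDNRightUnitor A)) D :=
  ⟨Equiv.prodPUnit _, fun _ => rfl, fun _ => HEq.rfl, fun _ => HEq.rfl⟩

end MDS

/-- the coherence maps of `P` are natural and satisfy the
associativity and unitality axioms of a lax monoidal functor `P : MDN → Set`. -/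
theorem P_lax_monoidal :
    (∀ (A A' B B' : ModalBox) (f : MDNHom A A') (g : MDNHom B B')
        (D : MDS A) (E : MDS B),
        MDS.map (MDNTensorHom f g) (D.tensor E) =
          (MDS.map f D).tensor (MDS.map g E)) ∧
    (∀ (A B C : ModalBox) (D : MDS A) (E : MDS B) (F : MDS C),
        MDS.Equivalent (MDS.map (MDNAssoc A B C) ((D.tensor E).tensor F))
          (D.tensor (E.tensor F))) ∧
    (∀ (A : ModalBox) (D : MDS A),
        MDS.Equivalent (MDS.map (MDNLeftUnitor A) (MDS.unitSystem.tensor D)) D) ∧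
    (∀ (A : ModalBox) (D : MDS A),
        MDS.Equivalent (MDS.map (MDNRightUnitor A) (D.tensor MDS.unitSystem)) D)
    :=
  ⟨fun _ _ _ _ => MDS.map_tensor, fun _ _ _ => MDS.equivalent_map_assoc,
    fun _ => MDS.equivalent_map_leftUnitor, fun _ => MDS.equivalent_map_rightUnitor⟩
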